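/- (Characteristic formulae for information states) Let P be a finite set of atomic propositions. For every inquisitive modal model M over P, every information state s of M, and every n ∈ ℕ, there exists an InqML formula χ^n_{M,s} of modal depth at most n such that for every state-pointed inquisitive modal model M',s' over P: M',s' ⊨ χ^n_{M,s} if and only if M',s' ~^n M,t for some t ⊆ s. -/
import Mathlib


/-- Formulas of inquisitive modal logic InqML over atomic propositions `P`. -/
inductive InqForm (P : Type) : Type
  | atom : P → InqForm P
  | bot : InqForm P
  | and : InqForm P → InqForm P → InqForm P
  | impl : InqForm P → InqForm P → InqForm P
  | idisj : InqForm P → InqForm P → InqForm P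
  | box : InqForm P → InqForm P
  | boxplus : InqForm P → InqForm P

/-- An inquisitive modal model `M = ⟨W, Σ, V⟩`. -/
structure InqModel (P : Type) where
  W : Type
  Sig : W → Set (Set W)
  Sig_nonempty : ∀ w, (Sig w).Nonempty
  Sig_downward : ∀ w, ∀ s ∈ Sig w, ∀ t ⊆ s, t ∈ Sig w
  V : P → Set W

/-- `σ(w) = ⋃ Σ(w)`. -/
def InqModel.sigma {P : Type} (M : InqModel P) (w : M.W) : Set M.W :=
  ⋃₀ M.Sig w

/-- Support of a formula at an information state `s ⊆ W`. -/
def support {P : Type} (M : InqModel P) : InqForm P → Set M.W → Prop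
  | .atom p, s => s ⊆ M.V p
  | .bot, s => s = ∅
  | .and φ ψ, s => support M φ s ∧ support M ψ s
  | .impl φ ψ, s => ∀ t ⊆ s, support M φ t → support M ψ t
  | .idisj φ ψ, s => support M φ s ∨ support M ψ s
  | .box φ, s => ∀ w ∈ s, support M φ (M.sigma w)
  | .boxplus φ, s => ∀ w ∈ s, ∀ t ∈ M.Sig w, support M φ t

/-- Truth at a world: `M,w ⊨ φ` iff `M,{w} ⊨ φ`. -/
def truth {P : Type} (M : InqModel P) (w : M.W) (φ : InqForm P) : Prop :=
  support M φ {w}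

/-- Modal depth: maximal nesting depth of `□` and `⊞`. -/
def mdepth {P : Type} : InqForm P → ℕ
  | .atom _ => 0
  | .bot => 0
  | .and φ ψ => max (mdepth φ) (mdepth ψ)
  | .impl φ ψ => max (mdepth φ) (mdepth ψ)
  | .idisj φ ψ => max (mdepth φ) (mdepth ψ)
  | .box φ => mdepth φ + 1
  | .boxplus φ => mdepth φ + 1

/-- Lift of a relation between worlds to sets of worlds: every world on either
side is related to some world on the other side. -/
def StateRel {W W' : Type} (Z : W → W' → Prop) (s : Set W) (s' : Set W') : Prop :=
  (∀ w ∈ s, ∃ w' ∈ s', Z w w') ∧ (∀ w' ∈ s', ∃ w ∈ s, Z w w')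

/-- `n`-bisimilarity between worlds of two inquisitive modal models. -/
def NBisimW {P : Type} (M M' : InqModel P) : ℕ → M.W → M'.W → Prop
  | 0, w, w' => ∀ p : P, w ∈ M.V p ↔ w' ∈ M'.V p
  | n + 1, w, w' => (∀ p : P, w ∈ M.V p ↔ w' ∈ M'.V p) ∧
      (∀ s ∈ M.Sig w, ∃ s' ∈ M'.Sig w', StateRel (NBisimW M M' n) s s') ∧
      (∀ s' ∈ M'.Sig w', ∃ s ∈ M.Sig w, StateRel (NBisimW M M' n) s s')

/-- `n`-bisimilarity between information states. -/
def NBisimS {P : Type} (M M' : InqModel P) (n : ℕ) (s : Set M.W) (s' : Set M'.W) : Prop :=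
  StateRel (NBisimW M M' n) s s'

/-- `Z` is a bisimulation between two inquisitive modal models. -/
def IsBisimulation {P : Type} (M M' : InqModel P) (Z : M.W → M'.W → Prop) : Prop :=
  ∀ w w', Z w w' →
    (∀ p : P, w ∈ M.V p ↔ w' ∈ M'.V p) ∧
    (∀ s ∈ M.Sig w, ∃ s' ∈ M'.Sig w', StateRel Z s s') ∧
    (∀ s' ∈ M'.Sig w', ∃ s ∈ M.Sig w, StateRel Z s s')

/-- Bisimilarity of worlds: inclusion in some bisimulation. -/
def BisimW {P : Type} (M M' : InqModel P) (w : M.W) (w' : M'.W) : Prop :=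
  ∃ Z, IsBisimulation M M' Z ∧ Z w w'

/-- Bisimilarity of information states. -/
def BisimS {P : Type} (M M' : InqModel P) (s : Set M.W) (s' : Set M'.W) : Prop :=
  StateRel (BisimW M M') s s'
/- ### Auxiliary development -/

open Classical

noncomputable section CharAux

namespace CharAux

variable {P : Type}

/-- Abstract `n`-types over `P`. -/
def Typ (P : Type) : ℕ → Type
  | 0 => Set P
  | n+1 => Set P × Set (Set (Typ P n))

instance typFinite (P : Type) [Finite P] : ∀ n, Finite (Typ P n)
  | 0 => by show Finite (Set P); infer_instance
  | n+1 => by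
      have := typFinite P n
      show Finite (Set P × Set (Set (Typ P n))); infer_instance

/-- The `n`-type of a world. -/
def tp (M : InqModel P) : (n : ℕ) → M.W → Typ P n
  | 0, w => {p | w ∈ M.V p}
  | n+1, w => (({p | w ∈ M.V p} : Set P),
      ({T | ∃ t ∈ M.Sig w, tp M n '' t = T} : Set (Set (Typ P n))))

lemma tp_zero (M : InqModel P) (w : M.W) : tp M 0 w = {p | w ∈ M.V p} := rfl

lemma tp_succ (M : InqModel P) (n : ℕ) (w : M.W) :
    tp M (n+1) w = (({p | w ∈ M.V p} : Set P),
      ({T | ∃ t ∈ M.Sig w, tp M n '' t = T} : Set (Set (Typ P n)))) := rfl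

/-- A list enumerating a set in a finite type. -/
def ofSet {X : Type} [Finite X] (T : Set X) : List X := (Set.toFinite T).toFinset.toList

lemma mem_ofSet {X : Type} [Finite X] {T : Set X} {x : X} : x ∈ ofSet T ↔ x ∈ T := by
  simp [ofSet]

/-- Negation. -/
def neg (φ : InqForm P) : InqForm P := .impl φ .bot

def conjL : List (InqForm P) → InqForm P
  | [] => .impl .bot .bot
  | φ :: l => .and φ (conjL l)

def disjL : List (InqForm P) → InqForm P
  | [] => .bot
  | φ :: l => .idisj φ (disjL l)

lemma support_empty (M : InqModel P) : ∀ φ : InqForm P, support M φ ∅ := by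
  intro φ
  induction φ with
  | atom p => intro x hx; exact absurd hx (by simp)
  | bot => rfl
  | and φ ψ ihφ ihψ => exact ⟨ihφ, ihψ⟩
  | impl φ ψ ihφ ihψ =>
      intro t ht _
      rw [Set.subset_empty_iff] at ht; subst ht; exact ihψ
  | idisj φ ψ ihφ ihψ => exact Or.inl ihφ
  | box φ ih => intro w hw; exact absurd hw (by simp)
  | boxplus φ ih => intro w hw; exact absurd hw (by simp)

lemma support_neg (M : InqModel P) (φ : InqForm P) (s : Set M.W) :
    support M (neg φ) s ↔ ∀ t ⊆ s, support M φ t → t = ∅ := Iff.rfl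

lemma support_conjL (M : InqModel P) (L : List (InqForm P)) (s : Set M.W) :
    support M (conjL L) s ↔ ∀ φ ∈ L, support M φ s := by
  induction L with
  | nil => simp only [conjL, List.not_mem_nil, false_implies, implies_true, iff_true]; exact fun t _ h => h
  | cons φ l ih =>
      show support M φ s ∧ support M (conjL l) s ↔ _
      rw [ih]; simp

lemma support_disjL (M : InqModel P) (L : List (InqForm P)) (s : Set M.W) :
    support M (disjL L) s ↔ (∃ φ ∈ L, support M φ s) ∨ s = ∅ := by
  induction L with
  | nil => simp [disjL, support]
  | cons φ l ih =>
      show support M φ s ∨ support M (disjL l) s ↔ _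
      rw [ih]
      constructor
      · rintro (h | h | h)
        · exact Or.inl ⟨φ, by simp, h⟩
        · obtain ⟨ψ, hψ, h⟩ := h; exact Or.inl ⟨ψ, by simp [hψ], h⟩
        · exact Or.inr h
      · rintro (⟨ψ, hψ, h⟩ | h)
        · rcases List.mem_cons.1 hψ with h' | h'
          · exact Or.inl (h' ▸ h)
          · exact Or.inr (Or.inl ⟨ψ, h', h⟩)
        · exact Or.inr (Or.inr h)

lemma mdepth_neg (φ : InqForm P) : mdepth (neg φ) = mdepth φ := by
  simp [neg, mdepth]

lemma mdepth_conjL (L : List (InqForm P)) (n : ℕ) (h : ∀ φ ∈ L, mdepth φ ≤ n) :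
    mdepth (conjL L) ≤ n := by
  induction L with
  | nil => simp [conjL, mdepth]
  | cons φ l ih =>
      show max (mdepth φ) (mdepth (conjL l)) ≤ n
      exact max_le (h φ (by simp)) (ih fun ψ hψ => h ψ (by simp [hψ]))

lemma mdepth_disjL (L : List (InqForm P)) (n : ℕ) (h : ∀ φ ∈ L, mdepth φ ≤ n) :
    mdepth (disjL L) ≤ n := by
  induction L with
  | nil => simp [disjL, mdepth]
  | cons φ l ih =>
      show max (mdepth φ) (mdepth (disjL l)) ≤ n
      exact max_le (h φ (by simp)) (ih fun ψ hψ => h ψ (by simp [hψ]))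

end CharAux

end CharAux
namespace CharAux

open scoped Classical

noncomputable section

variable {P : Type}

/-- View a `(n+1)`-type as a pair (definitional). -/
def toProd {n : ℕ} (τ : Typ P (n+1)) : Set P × Set (Set (Typ P n)) := τ

lemma toProd_tp (M : InqModel P) (n : ℕ) (w : M.W) :
    toProd (tp M (n+1) w) = (({p | w ∈ M.V p} : Set P),
      ({T | ∃ t ∈ M.Sig w, tp M n '' t = T} : Set (Set (Typ P n)))) := rfl

lemma toProd_inj {n : ℕ} {τ τ' : Typ P (n+1)} (h : toProd τ = toProd τ') : τ = τ' := h

/-- Conjunction of literals describing a `0`-type. -/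
def AtomConj [Finite P] (π : Set P) : InqForm P :=
  conjL ((ofSet (Set.univ : Set P)).map fun p =>
    if p ∈ π then InqForm.atom p else neg (.atom p))

/-- `⊆ T` state-formula built from world formulas `f`. -/
def XiOf {X : Type} [Finite X] (f : X → InqForm P) (T : Set X) : InqForm P :=
  neg (conjL ((ofSet T).map fun τ => neg (f τ)))

/-- Characteristic world formula of an abstract type. -/
def Phi [Finite P] : (n : ℕ) → Typ P n → InqForm P
  | 0, π => AtomConj π
  | n+1, τ =>
      .and (AtomConj (toProd τ).1)
        (.and (.boxplus (disjL ((ofSet (toProd τ).2).map fun T => XiOf (Phi n) T)))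
          (conjL ((ofSet ((toProd τ).2 \ {∅})).map fun T =>
            neg (.boxplus (.impl (XiOf (Phi n) T)
              (disjL ((ofSet T).map fun τ' => XiOf (Phi n) (T \ {τ'}))))))))
  termination_by n _ => n

lemma mdepth_AtomConj [Finite P] (π : Set P) : mdepth (AtomConj π) ≤ 0 := by
  apply mdepth_conjL
  intro φ hφ
  obtain ⟨p, -, rfl⟩ := List.mem_map.1 hφ
  by_cases hp : p ∈ π
  · simp [if_pos hp, mdepth]
  · simp [if_neg hp, mdepth_neg, mdepth]

lemma mdepth_XiOf {X : Type} [Finite X] (f : X → InqForm P) (T : Set X) (n : ℕ)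
    (h : ∀ x, mdepth (f x) ≤ n) : mdepth (XiOf f T) ≤ n := by
  rw [XiOf, mdepth_neg]
  apply mdepth_conjL
  intro φ hφ
  obtain ⟨τ, -, rfl⟩ := List.mem_map.1 hφ
  rw [mdepth_neg]; exact h τ

lemma mdepth_Phi [Finite P] : ∀ (n : ℕ) (τ : Typ P n), mdepth (Phi n τ) ≤ n := by
  intro n
  induction n with
  | zero => intro τ; rw [Phi]; exact mdepth_AtomConj τ
  | succ n ih =>
      intro τ
      rw [Phi]
      have ihd : ∀ x, mdepth (Phi n x) ≤ n := ih
      show max (mdepth (AtomConj (toProd τ).1)) (max _ _) ≤ n + 1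
      apply max_le ((mdepth_AtomConj _).trans (Nat.zero_le _))
      apply max_le
      · show mdepth (disjL _) + 1 ≤ n + 1
        apply Nat.add_le_add_right
        apply mdepth_disjL
        intro φ hφ
        obtain ⟨T, -, rfl⟩ := List.mem_map.1 hφ
        exact mdepth_XiOf _ _ n ihd
      · apply mdepth_conjL
        intro φ hφ
        obtain ⟨T, -, rfl⟩ := List.mem_map.1 hφ
        rw [mdepth_neg]
        show mdepth (.impl _ _) + 1 ≤ n + 1
        apply Nat.add_le_add_right
        apply max_le (mdepth_XiOf _ _ n ihd)
        apply mdepth_disjL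
        intro ψ hψ
        obtain ⟨τ', -, rfl⟩ := List.mem_map.1 hψ
        exact mdepth_XiOf _ _ n ihd

/-- A type is realized if it is the type of some world in some model. -/
def Real (n : ℕ) (τ : Typ P n) : Prop :=
  ∃ (M₀ : InqModel P) (w₀ : M₀.W), tp M₀ n w₀ = τ

lemma empty_mem_Sig (M : InqModel P) (w : M.W) : ∅ ∈ M.Sig w := by
  obtain ⟨t, ht⟩ := M.Sig_nonempty w
  exact M.Sig_downward w t ht ∅ (Set.empty_subset t)

lemma support_AtomConj [Finite P] (π : Set P) (M : InqModel P) (s : Set M.W) :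
    support M (AtomConj π) s ↔ ∀ w ∈ s, tp M 0 w = π := by
  rw [AtomConj, support_conjL]
  constructor
  · intro h w hw
    apply Set.ext
    intro p
    have hmem : (if p ∈ π then InqForm.atom p else neg (.atom p)) ∈
        (ofSet (Set.univ : Set P)).map (fun p =>
          if p ∈ π then InqForm.atom p else neg (.atom p)) :=
      List.mem_map.2 ⟨p, mem_ofSet.2 (Set.mem_univ p), rfl⟩
    have hsupp := h _ hmem
    by_cases hp : p ∈ π
    · rw [if_pos hp] at hsupp
      exact ⟨fun _ => hp, fun _ => hsupp hw⟩
    · rw [if_neg hp, support_neg] at hsupp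
      constructor
      · intro hwv
        exfalso
        have h1 : ({w} : Set M.W) ⊆ s := Set.singleton_subset_iff.2 hw
        have h2 : ({w} : Set M.W) ⊆ M.V p := Set.singleton_subset_iff.2 hwv
        have := hsupp {w} h1 h2
        simp at this
      · intro hpπ; exact absurd hpπ hp
  · intro h φ hφ
    obtain ⟨p, -, rfl⟩ := List.mem_map.1 hφ
    by_cases hp : p ∈ π
    · rw [if_pos hp]
      intro w hw
      have := h w hw
      have := (Set.ext_iff.1 this p).2 hp
      exact this
    · rw [if_neg hp]
      intro t ht hsup
      by_contra hne
      obtain ⟨w, hw⟩ := Set.nonempty_iff_ne_empty.2 hne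
      have h1 : tp M 0 w = π := h w (ht hw)
      have h2 : w ∈ M.V p := hsup hw
      exact hp ((Set.ext_iff.1 h1 p).1 h2)

lemma support_XiOf [Finite P] {n : ℕ} (f : Typ P n → InqForm P) (T : Set (Typ P n))
    (hT : ∀ τ ∈ T, ∀ (M' : InqModel P) (s' : Set M'.W),
      support M' (f τ) s' ↔ ∀ w ∈ s', tp M' n w = τ)
    (M' : InqModel P) (s' : Set M'.W) :
    support M' (XiOf f T) s' ↔ ∀ w ∈ s', tp M' n w ∈ T := by
  rw [XiOf, support_neg]
  constructor
  · intro h w hw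
    by_contra hne
    have : ({w} : Set M'.W) = ∅ := by
      apply h {w} (Set.singleton_subset_iff.2 hw)
      rw [support_conjL]
      intro φ hφ
      obtain ⟨τ, hτ, rfl⟩ := List.mem_map.1 hφ
      rw [support_neg]
      intro v hv hsup
      rcases Set.subset_singleton_iff_eq.1 hv with h' | h'
      · exact h'
      · exfalso
        have := (hT τ (mem_ofSet.1 hτ) M' v).1 hsup w (h' ▸ rfl)
        exact hne (this ▸ mem_ofSet.1 hτ)
    simp at this
  · intro h u hu hall
    by_contra hne
    obtain ⟨w, hw⟩ := Set.nonempty_iff_ne_empty.2 hne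
    have hτT : tp M' n w ∈ T := h w (hu hw)
    have hmem : neg (f (tp M' n w)) ∈ (ofSet T).map fun τ => neg (f τ) :=
      List.mem_map.2 ⟨tp M' n w, mem_ofSet.2 hτT, rfl⟩
    have := (support_conjL M' _ u).1 hall _ hmem
    rw [support_neg] at this
    have heq := this {w} (Set.singleton_subset_iff.2 hw)
      ((hT _ hτT M' {w}).2 (by rintro x rfl; rfl))
    simp at heq

end

end CharAux
namespace CharAux

noncomputable section

variable {P : Type}

lemma Phi_correct [Finite P] : ∀ (n : ℕ) (τ : Typ P n), Real n τ →
    ∀ (M' : InqModel P) (s' : Set M'.W),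
      support M' (Phi n τ) s' ↔ ∀ w ∈ s', tp M' n w = τ := by
  intro n
  induction n with
  | zero =>
      intro τ _ M' s'
      rw [Phi]
      exact support_AtomConj τ M' s'
  | succ n ih =>
      intro τ hreal M' s'
      obtain ⟨M₀, w₀, hw₀⟩ := hreal
      have hfam : {T | ∃ t ∈ M₀.Sig w₀, tp M₀ n '' t = T} = (toProd τ).2 := by
        rw [← hw₀]; rfl
      have hSreal : ∀ T ∈ (toProd τ).2, ∀ τ' ∈ T, Real n τ' := by
        intro T hT τ' hτ'
        rw [← hfam] at hT
        obtain ⟨t, ht, rfl⟩ := hT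
        obtain ⟨x, hx, rfl⟩ := hτ'
        exact ⟨M₀, x, rfl⟩
      have hSdown : ∀ T ∈ (toProd τ).2, ∀ T' ⊆ T, T' ∈ (toProd τ).2 := by
        intro T hT T' hT'
        rw [← hfam] at hT ⊢
        obtain ⟨t, ht, rfl⟩ := hT
        refine ⟨{x | x ∈ t ∧ tp M₀ n x ∈ T'},
          M₀.Sig_downward _ _ ht _ (fun x hx => hx.1), ?_⟩
        apply Set.ext; intro τ'
        constructor
        · rintro ⟨x, ⟨hxt, hxT'⟩, rfl⟩; exact hxT'
        · intro hτ'
          obtain ⟨x, hxt, hxeq⟩ := hT' hτ'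
          exact ⟨x, ⟨hxt, by rw [hxeq]; exact hτ'⟩, hxeq⟩
      have hSempty : ∅ ∈ (toProd τ).2 := by
        rw [← hfam]; exact ⟨∅, empty_mem_Sig M₀ w₀, Set.image_empty _⟩
      have hXiC : ∀ (T : Set (Typ P n)), (∀ τ' ∈ T, Real n τ') →
          ∀ (M'' : InqModel P) (s'' : Set M''.W),
            support M'' (XiOf (Phi n) T) s'' ↔ ∀ w ∈ s'', tp M'' n w ∈ T :=
        fun T hTr M'' s'' => support_XiOf (Phi n) T (fun τ' h => ih τ' (hTr τ' h)) M'' s''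
      have htpw : ∀ w : M'.W, tp M' (n+1) w = τ ↔
          (({p | w ∈ M'.V p} : Set P) = (toProd τ).1 ∧
            {T | ∃ t ∈ M'.Sig w, tp M' n '' t = T} = (toProd τ).2) := by
        intro w
        constructor
        · intro h; rw [← h]; exact ⟨rfl, rfl⟩
        · intro ⟨h1, h2⟩
          apply toProd_inj
          rw [toProd_tp]
          exact Prod.ext_iff.2 ⟨h1, h2⟩
      have hB : support M'
            (.boxplus (disjL ((ofSet (toProd τ).2).map fun T => XiOf (Phi n) T))) s'
          ↔ ∀ w ∈ s', ∀ t ∈ M'.Sig w, tp M' n '' t ∈ (toProd τ).2 := by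
        show (∀ w ∈ s', ∀ t ∈ M'.Sig w, support M' (disjL _) t) ↔ _
        constructor
        · intro h w hw t ht
          rcases (support_disjL M' _ t).1 (h w hw t ht) with ⟨φ, hφ, hsup⟩ | h0
          · obtain ⟨T, hT, rfl⟩ := List.mem_map.1 hφ
            have hT' : T ∈ (toProd τ).2 := mem_ofSet.1 hT
            have hmem := (hXiC T (hSreal T hT') M' t).1 hsup
            exact hSdown T hT' _ (by rintro τ' ⟨x, hx, rfl⟩; exact hmem x hx)
          · subst h0; rw [Set.image_empty]; exact hSempty
        · intro h w hw t ht
          apply (support_disjL M' _ t).2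
          left
          refine ⟨XiOf (Phi n) (tp M' n '' t),
            List.mem_map.2 ⟨_, mem_ofSet.2 (h w hw t ht), rfl⟩, ?_⟩
          exact (hXiC _ (hSreal _ (h w hw t ht)) M' t).2 (fun x hx => ⟨x, hx, rfl⟩)
      have hGamma : ∀ T ∈ (toProd τ).2, T ≠ ∅ → ∀ (u : Set M'.W),
          support M' (.boxplus (.impl (XiOf (Phi n) T)
            (disjL ((ofSet T).map fun τ' => XiOf (Phi n) (T \ {τ'}))))) u
          ↔ ∀ w ∈ u, ¬ ∃ t ∈ M'.Sig w, tp M' n '' t = T := by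
        intro T hTS hTne u
        have hreal' : ∀ τ' ∈ T, Real n τ' := hSreal T hTS
        show (∀ w ∈ u, ∀ t ∈ M'.Sig w,
          (∀ v ⊆ t, support M' (XiOf (Phi n) T) v → support M' (disjL _) v)) ↔ _
        constructor
        · rintro h w hw ⟨t, ht, htT⟩
          have ht0 : t ≠ ∅ := by
            intro h0; rw [h0, Set.image_empty] at htT; exact hTne htT.symm
          have himpl := h w hw t ht t (subset_refl t)
            ((hXiC T hreal' M' t).2 (fun x hx => htT ▸ ⟨x, hx, rfl⟩))
          rcases (support_disjL M' _ t).1 himpl with ⟨φ, hφ, hsup⟩ | h0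
          · obtain ⟨τ', hτ', rfl⟩ := List.mem_map.1 hφ
            have hτ'T : τ' ∈ T := mem_ofSet.1 hτ'
            have hmem := (hXiC (T \ {τ'}) (fun x hx => hreal' x hx.1) M' t).1 hsup
            rw [← htT] at hτ'T
            obtain ⟨x, hx, hxe⟩ := hτ'T
            exact (hmem x hx).2 hxe
          · exact ht0 h0
        · intro h w hw t ht v hv hXiv
          have hvT : ∀ x ∈ v, tp M' n x ∈ T := (hXiC T hreal' M' v).1 hXiv
          apply (support_disjL M' _ v).2
          by_cases hv0 : v = ∅
          · exact Or.inr hv0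
          left
          have hvS : v ∈ M'.Sig w := M'.Sig_downward w t ht v hv
          have hne : tp M' n '' v ≠ T := fun he => h w hw ⟨v, hvS, he⟩
          have hsub : tp M' n '' v ⊆ T := by rintro τ' ⟨x, hx, rfl⟩; exact hvT x hx
          obtain ⟨τ', hτ'T, hτ'n⟩ : ∃ τ' ∈ T, τ' ∉ tp M' n '' v := by
            by_contra hc
            push_neg at hc
            exact hne (Set.Subset.antisymm hsub hc)
          refine ⟨XiOf (Phi n) (T \ {τ'}),
            List.mem_map.2 ⟨τ', mem_ofSet.2 hτ'T, rfl⟩, ?_⟩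
          apply (hXiC (T \ {τ'}) (fun x hx => hreal' x hx.1) M' v).2
          intro x hx
          exact ⟨hvT x hx, fun hxe => hτ'n ⟨x, hx, hxe⟩⟩
      have hC : support M' (conjL ((ofSet ((toProd τ).2 \ {∅})).map fun T =>
            neg (.boxplus (.impl (XiOf (Phi n) T)
              (disjL ((ofSet T).map fun τ' => XiOf (Phi n) (T \ {τ'}))))))) s'
          ↔ ∀ T ∈ (toProd τ).2 \ ({∅} : Set (Set (Typ P n))), ∀ w ∈ s',
              ∃ t ∈ M'.Sig w, tp M' n '' t = T := by
        rw [support_conjL]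
        constructor
        · intro h T hT w hw
          have hTS : T ∈ (toProd τ).2 := hT.1
          have hTne : T ≠ ∅ := hT.2
          have hα := h _ (List.mem_map.2 ⟨T, mem_ofSet.2 hT, rfl⟩)
          rw [support_neg] at hα
          by_contra hno
          have heq : ({w} : Set M'.W) = ∅ := by
            apply hα {w} (Set.singleton_subset_iff.2 hw)
            apply (hGamma T hTS hTne {w}).2
            intro x hx
            rw [Set.mem_singleton_iff] at hx
            subst hx
            exact hno
          simp at heq
        · intro h φ hφ
          obtain ⟨T, hT, rfl⟩ := List.mem_map.1 hφ
          have hT' := mem_ofSet.1 hT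
          have hTne : T ≠ ∅ := hT'.2
          rw [support_neg]
          intro u hu hγ
          rw [hGamma T hT'.1 hTne u] at hγ
          apply Set.eq_empty_iff_forall_notMem.2
          intro w hw
          exact hγ w hw (h T hT' w (hu hw))
      rw [Phi]
      show support M' (AtomConj (toProd τ).1) s' ∧ _ ∧ _ ↔ _
      constructor
      · rintro ⟨h1, h2, h3⟩
        intro w hw
        apply (htpw w).2
        constructor
        · exact (support_AtomConj _ M' s').1 h1 w hw
        · apply Set.ext; intro T
          constructor
          · rintro ⟨t, ht, rfl⟩
            exact (hB.1 h2) w hw t ht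
          · intro hTS
            by_cases hT0 : T = ∅
            · subst hT0; exact ⟨∅, empty_mem_Sig M' w, Set.image_empty _⟩
            · exact (hC.1 h3) T ⟨hTS, hT0⟩ w hw
      · intro h
        refine ⟨?_, ?_, ?_⟩
        · apply (support_AtomConj _ M' s').2
          intro w hw
          exact ((htpw w).1 (h w hw)).1
        · apply hB.2
          intro w hw t ht
          have := ((htpw w).1 (h w hw)).2
          rw [← this]
          exact ⟨t, ht, rfl⟩
        · apply hC.2
          intro T hT w hw
          have := ((htpw w).1 (h w hw)).2
          rw [← this] at hT
          exact hT.1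

lemma tp_eq_iff_nbisim : ∀ (n : ℕ) (M M' : InqModel P) (w : M.W) (w' : M'.W),
    tp M n w = tp M' n w' ↔ NBisimW M M' n w w' := by
  intro n
  induction n with
  | zero =>
      intro M M' w w'
      show _ ↔ ∀ p, w ∈ M.V p ↔ w' ∈ M'.V p
      constructor
      · intro h p
        exact Set.ext_iff.1 (h : ({p | w ∈ M.V p} : Set P) = {p | w' ∈ M'.V p}) p
      · intro h
        show ({p | w ∈ M.V p} : Set P) = {p | w' ∈ M'.V p}
        exact Set.ext h
  | succ n ih =>
      intro M M' w w'
      have himg : ∀ (t : Set M.W) (t' : Set M'.W), StateRel (NBisimW M M' n) t t' →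
          tp M n '' t = tp M' n '' t' := by
        rintro t t' ⟨hf, hb⟩
        apply Set.ext; intro τ'
        constructor
        · rintro ⟨x, hx, rfl⟩
          obtain ⟨y, hy, hxy⟩ := hf x hx
          exact ⟨y, hy, ((ih M M' x y).2 hxy).symm⟩
        · rintro ⟨y, hy, rfl⟩
          obtain ⟨x, hx, hxy⟩ := hb y hy
          exact ⟨x, hx, (ih M M' x y).2 hxy⟩
      constructor
      · intro h
        have h1 : (toProd (tp M (n+1) w)).1 = (toProd (tp M' (n+1) w')).1 :=
          congrArg (fun x => (toProd x).1) h
        have h2 : (toProd (tp M (n+1) w)).2 = (toProd (tp M' (n+1) w')).2 :=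
          congrArg (fun x => (toProd x).2) h
        have h2' : ({T | ∃ t ∈ M.Sig w, tp M n '' t = T} : Set (Set (Typ P n)))
            = {T | ∃ u ∈ M'.Sig w', tp M' n '' u = T} := h2
        refine ⟨?_, ?_, ?_⟩
        · intro p
          exact Set.ext_iff.1 (h1 : ({p | w ∈ M.V p} : Set P) = {p | w' ∈ M'.V p}) p
        · intro t ht
          have hmem : tp M n '' t ∈ {T | ∃ u ∈ M'.Sig w', tp M' n '' u = T} :=
            h2' ▸ ⟨t, ht, rfl⟩
          obtain ⟨u, hu, he⟩ := hmem
          refine ⟨u, hu, ?_, ?_⟩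
          · intro x hx
            have : tp M n x ∈ tp M' n '' u := by
              rw [he]; exact ⟨x, hx, rfl⟩
            obtain ⟨y, hy, hyx⟩ := this
            exact ⟨y, hy, (ih M M' x y).1 hyx.symm⟩
          · intro y hy
            have : tp M' n y ∈ tp M n '' t := by
              rw [← he]; exact ⟨y, hy, rfl⟩
            obtain ⟨x, hx, hxy⟩ := this
            exact ⟨x, hx, (ih M M' x y).1 hxy⟩
        · intro u hu
          have hmem : tp M' n '' u ∈ {T | ∃ t ∈ M.Sig w, tp M n '' t = T} :=
            h2'.symm ▸ ⟨u, hu, rfl⟩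
          obtain ⟨t, ht, he⟩ := hmem
          refine ⟨t, ht, ?_, ?_⟩
          · intro x hx
            have : tp M n x ∈ tp M' n '' u := by
              rw [← he]; exact ⟨x, hx, rfl⟩
            obtain ⟨y, hy, hyx⟩ := this
            exact ⟨y, hy, (ih M M' x y).1 hyx.symm⟩
          · intro y hy
            have : tp M' n y ∈ tp M n '' t := by
              rw [he]; exact ⟨y, hy, rfl⟩
            obtain ⟨x, hx, hxy⟩ := this
            exact ⟨x, hx, (ih M M' x y).1 hxy⟩
      · rintro ⟨hat, hforth, hback⟩
        apply toProd_inj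
        apply Prod.ext_iff.2
        constructor
        · exact Set.ext hat
        · apply Set.ext; intro T
          constructor
          · rintro ⟨t, ht, rfl⟩
            obtain ⟨t', ht', hrel⟩ := hforth t ht
            exact ⟨t', ht', (himg t t' hrel).symm⟩
          · rintro ⟨t', ht', rfl⟩
            obtain ⟨t, ht, hrel⟩ := hback t' ht'
            exact ⟨t, ht, himg t t' hrel⟩

end

end CharAux
/-- **Characteristic formulae for information states**: over a finite set of
atomic propositions, there is a formula of modal depth at most `n` supported by
exactly those state-pointed models that are `n`-bisimilar to some subset of `s`. -/
theorem characteristic_formula_state {P : Type} [Finite P]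
    (M : InqModel P) (s : Set M.W) (n : ℕ) :
    ∃ χ : InqForm P, mdepth χ ≤ n ∧
      ∀ (M' : InqModel P) (s' : Set M'.W),
        support M' χ s' ↔ ∃ t ⊆ s, NBisimS M' M n s' t := by
  classical
  refine ⟨CharAux.XiOf (CharAux.Phi n) (CharAux.tp M n '' s), ?_, ?_⟩
  · exact CharAux.mdepth_XiOf _ _ n (CharAux.mdepth_Phi n)
  · intro M' s'
    have hXi := CharAux.support_XiOf (CharAux.Phi n) (CharAux.tp M n '' s)
      (fun τ hτ M₁ s₁ => by
        obtain ⟨w, hw, rfl⟩ := hτ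
        exact CharAux.Phi_correct n _ ⟨M, w, rfl⟩ M₁ s₁) M' s'
    rw [hXi]
    constructor
    · intro h
      refine ⟨{w ∈ s | ∃ w' ∈ s', NBisimW M' M n w' w}, fun w hw => hw.1, ?_, ?_⟩
      · intro w' hw'
        obtain ⟨w, hw, he⟩ := h w' hw'
        have hb : NBisimW M' M n w' w := (CharAux.tp_eq_iff_nbisim n M' M w' w).1 he.symm
        exact ⟨w, ⟨hw, w', hw', hb⟩, hb⟩
      · rintro w ⟨hw, w', hw', hb⟩
        exact ⟨w', hw', hb⟩
    · rintro ⟨t, hts, h1, h2⟩ w' hw'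
      obtain ⟨w, hw, hb⟩ := h1 w' hw'
      exact ⟨w, hts hw, ((CharAux.tp_eq_iff_nbisim n M' M w' w).2 hb).symm⟩
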